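/- For n ≥ 0, Q̃_n² = 2 F̃_n Q̃_n − 3(F_{2n+3} + 2ε F_{2n+4}), where F̃_n = F_n + ε F_{n+1} is a scalar dual number. -/

import Mathlib

open Quaternion TrivSqZeroExt DualNumber

noncomputable section

/-- The n-th Fibonacci quaternion Q_n = F_n + i F_{n+1} + j F_{n+2} + k F_{n+3}. -/
def fibQ (n : ℕ) : ℍ[ℝ] :=
  ⟨Nat.fib n, Nat.fib (n+1), Nat.fib (n+2), Nat.fib (n+3)⟩

/-- Lucas numbers: L_0 = 2, L_1 = 1. -/
def lucas : ℕ → ℕ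
  | 0 => 2
  | 1 => 1
  | n + 2 => lucas n + lucas (n+1)

/-- The n-th Lucas quaternion K_n = L_n + i L_{n+1} + j L_{n+2} + k L_{n+3}. -/
def lucasQ (n : ℕ) : ℍ[ℝ] :=
  ⟨lucas n, lucas (n+1), lucas (n+2), lucas (n+3)⟩

/-- The n-th dual Fibonacci quaternion Q̃_n = Q_n + ε Q_{n+1}. -/
def dQ (n : ℕ) : DualNumber ℍ[ℝ] := inl (fibQ n) + inl (fibQ (n+1)) * ε

/-- The n-th dual Lucas quaternion K̃_n = K_n + ε K_{n+1}. -/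
def dK (n : ℕ) : DualNumber ℍ[ℝ] := inl (lucasQ n) + inl (lucasQ (n+1)) * ε

/-- Conjugate of the dual Fibonacci quaternion (componentwise quaternion conjugation). -/
def dQconj (n : ℕ) : DualNumber ℍ[ℝ] := inl (star (fibQ n)) + inl (star (fibQ (n+1))) * ε

/-- The dual Fibonacci number F̃_n = F_n + ε F_{n+1} as a scalar dual quaternion. -/
def dF (n : ℕ) : DualNumber ℍ[ℝ] :=
  inl ((Nat.fib n : ℝ) : ℍ[ℝ]) + inl ((Nat.fib (n+1) : ℝ) : ℍ[ℝ]) * ε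

/-- The dual Lucas number L̃_n = L_n + ε L_{n+1} as a scalar dual quaternion. -/
def dL (n : ℕ) : DualNumber ℍ[ℝ] :=
  inl ((lucas n : ℝ) : ℍ[ℝ]) + inl ((lucas (n+1) : ℝ) : ℍ[ℝ]) * ε

def qi : ℍ[ℝ] := ⟨0,1,0,0⟩
def qj : ℍ[ℝ] := ⟨0,0,1,0⟩
def qk : ℍ[ℝ] := ⟨0,0,0,1⟩

/-! Since `Q̃_n + Q̃_n* = 2 F̃_n` for the conjugate `Q̃_n*`, the ring identity
`x² = (x + x*) x - x* x` reduces the claim to `Q̃_n* Q̃_n = 3 (F_{2n+3} + 2ε F_{2n+4})`.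
Its non-dual part is `|Q_n|² = F_{2n+1} + F_{2n+5} = 3 F_{2n+3}`, and by polarization its dual part
is `|Q_n + Q_{n+1}|² - |Q_n|² - |Q_{n+1}|²`, where `Q_n + Q_{n+1} = Q_{n+2}`. -/

namespace DualNumber

theorem smul_inl_add_inl_mul_eps {S A : Type*} [CommSemiring S] [Semiring A] [Algebra S A]
    (s : S) (a b : A) : s • (inl a + inl b * ε : DualNumber A) = inl (s • a) + inl (s • b) * ε := by
  ext <;> simp

variable {R : Type*} [CommRing R]

theorem inl_add_inl_mul_eps_add_star (q p : ℍ[R]) :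
    (inl q + inl p * ε) + (inl (star q) + inl (star p) * ε : DualNumber ℍ[R]) =
      2 * (inl (q.re : ℍ[R]) + inl (p.re : ℍ[R]) * ε) := by
  calc _ = inl (q + star q) + inl (p + star p) * ε := by rw [inl_add, inl_add, add_mul]; abel
    _ = _ := by rw [self_add_star, self_add_star, inl_mul, inl_mul, mul_add, mul_assoc]; rfl

theorem star_mul_inl_add_inl_mul_eps (q p : ℍ[R]) :
    (inl (star q) + inl (star p) * ε) * (inl q + inl p * ε : DualNumber ℍ[R]) =
      inl ((normSq q : R) : ℍ[R]) +
        inl ((normSq (q + p) - normSq q - normSq p : R) : ℍ[R]) * ε := by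
  have polarization :
      star q * p + star p * q = ((normSq (q + p) - normSq q - normSq p : R) : ℍ[R]) := by
    simp only [coe_sub, ← star_mul_self, star_add, add_mul, mul_add]
    abel
  calc _ = inl (star q * q) + inl (star q * p + star p * q) * ε := by
        simp only [add_mul, mul_add, inl_mul, inl_add, mul_assoc, (commute_eps_left _).eq,
          eps_mul_eps, mul_zero, add_zero]
        abel
    _ = _ := by rw [star_mul_self, polarization]

end DualNumber

theorem Nat.fib_add_four (m : ℕ) : fib (m + 4) = fib m + fib (m + 2) + 2 * fib (m + 1) := by
  simp only [fib_add_two, show m + 4 = m + 2 + 2 by rfl, show m + 3 = m + 1 + 2 by rfl]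
  ring

theorem Nat.sum_sq_four_consecutive_fib (n : ℕ) :
    fib n ^ 2 + fib (n + 1) ^ 2 + fib (n + 2) ^ 2 + fib (n + 3) ^ 2 = 3 * fib (2 * n + 3) := by
  have h₁ := fib_two_mul_add_one n
  have h₂ := fib_two_mul_add_one (n + 2)
  have h₃ := fib_add_four (2 * n + 1)
  have h₄ := fib_add_two (n := 2 * n + 1)
  rw [show 2 * (n + 2) + 1 = 2 * n + 1 + 4 by ring] at h₂
  linarith

theorem fibQ_add_two (n : ℕ) : fibQ (n + 2) = fibQ n + fibQ (n + 1) := by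
  ext <;> simp only [Quaternion.re_add, Quaternion.imI_add, Quaternion.imJ_add,
    Quaternion.imK_add] <;> simp only [fibQ, Nat.fib_add_two, Nat.cast_add]

theorem re_fibQ (n : ℕ) : (fibQ n).re = Nat.fib n := rfl

theorem normSq_fibQ (n : ℕ) : normSq (fibQ n) = 3 * Nat.fib (2 * n + 3) := by
  rw [normSq_def']
  show (Nat.fib n : ℝ) ^ 2 + (Nat.fib (n + 1) : ℝ) ^ 2 + (Nat.fib (n + 2) : ℝ) ^ 2 +
    (Nat.fib (n + 3) : ℝ) ^ 2 = _
  exact_mod_cast Nat.sum_sq_four_consecutive_fib n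

theorem dQ_add_dQconj (n : ℕ) : dQ n + dQconj n = 2 * dF n := by
  rw [dQ, dQconj, DualNumber.inl_add_inl_mul_eps_add_star, dF, re_fibQ, re_fibQ]

theorem dQconj_mul_dQ (n : ℕ) :
    dQconj n * dQ n = (3 : ℝ) • (inl ((Nat.fib (2*n+3) : ℝ) : ℍ[ℝ]) +
        inl ((2 * (Nat.fib (2*n+4) : ℝ) : ℍ[ℝ])) * ε) := by
  have hdual : (Nat.fib (2 * (n + 2) + 3) : ℝ) - Nat.fib (2 * n + 3) - Nat.fib (2 * (n + 1) + 3) =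
      2 * Nat.fib (2 * n + 4) := by
    rw [show 2 * (n + 2) + 3 = 2 * n + 3 + 4 by ring, show 2 * (n + 1) + 3 = 2 * n + 3 + 2 by ring,
      show 2 * n + 4 = 2 * n + 3 + 1 by ring, Nat.fib_add_four]
    push_cast
    ring
  rw [dQconj, dQ, DualNumber.star_mul_inl_add_inl_mul_eps, ← fibQ_add_two, normSq_fibQ,
    normSq_fibQ, normSq_fibQ, ← mul_sub, ← mul_sub, hdual, DualNumber.smul_inl_add_inl_mul_eps]
  congr 2 <;> simp only [coe_mul, ← coe_mul_eq_smul]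
  rfl

theorem dual_fib_sq (n : ℕ) :
    dQ n ^ 2 = 2 * dF n * dQ n -
      (3 : ℝ) • (inl ((Nat.fib (2*n+3) : ℝ) : ℍ[ℝ]) +
        inl ((2 * (Nat.fib (2*n+4) : ℝ) : ℍ[ℝ])) * ε) := by
  rw [← dQ_add_dQconj, ← dQconj_mul_dQ, add_mul, add_sub_cancel_right, sq]
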